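/- For every election instance with exactly two parties, there exists a seat assignment satisfying WUQ°: each party p receives total weight at most u°(p) = min{ r ∈ R(w)_{[k]} : r ≥ q(p) }. In particular, giving party 1 a subset of seats of total weight exactly u°(1) and party 2 the rest works, since rep(2) = ω − u°(1) ≤ ω − q(1) = q(2) ≤ u°(2). -/

import Mathlib

open Finset

/-- Total weight of the seats assigned to party `p` under assignment `s`. -/
def rep {m k : ℕ} (w : Fin k → ℕ) (s : Fin k → Fin m) (p : Fin m) : ℕ :=
  ∑ t, if s t = p then w t else 0

/-- The quota of party `p`: total weight times its vote share. -/
def quota {m k : ℕ} (n : ℕ) (v : Fin m → ℕ) (w : Fin k → ℕ) (p : Fin m) : ℚ :=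
  (∑ t, (w t : ℚ)) * (v p : ℚ) / (n : ℚ)

/-- Total weight assigned to party `p` in rounds before round `t`. -/
def gw {m k : ℕ} (w : Fin k → ℕ) (s : Fin k → Fin m) (t : Fin k) (p : Fin m) : ℕ :=
  ∑ t' ∈ Finset.univ.filter (fun t' => t' < t), if s t' = p then w t' else 0

/-!
Give party `0` a set of seats `T₀` whose weight is the least subset sum reaching its quota
(`u°(0)`), and party `1` the remaining seats. Minimality of `T₀` is WUQ° for party `0`; for
party `1`, since the two quotas add up to the total weight `ω`,
`rep 1 = ω - u°(0) ≤ ω - q(0) = q(1)`, which is below every subset sum reaching `q(1)`.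
-/

theorem exists_min_subset_sum_ge {ι : Type*} [Fintype ι] (w : ι → ℕ) {q : ℚ}
    (hq : q ≤ ((∑ t, w t : ℕ) : ℚ)) :
    ∃ T₀ : Finset ι, q ≤ ((∑ t ∈ T₀, w t : ℕ) : ℚ) ∧
      ∀ T : Finset ι, q ≤ ((∑ t ∈ T, w t : ℕ) : ℚ) → ∑ t ∈ T₀, w t ≤ ∑ t ∈ T, w t := by
  obtain ⟨T₀, hT₀, hmin⟩ := exists_min_image (univ.filter fun T => q ≤ ((∑ t ∈ T, w t : ℕ) : ℚ))
    (fun T => ∑ t ∈ T, w t) ⟨univ, by simpa using hq⟩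
  simp only [mem_filter, mem_univ, true_and] at hT₀ hmin
  exact ⟨T₀, hT₀, hmin⟩

theorem quota_nonneg {m k : ℕ} (n : ℕ) (v : Fin m → ℕ) (w : Fin k → ℕ) (p : Fin m) :
    0 ≤ quota n v w p := by
  unfold quota
  positivity

theorem sum_quota {m k : ℕ} {n : ℕ} {v : Fin m → ℕ} (w : Fin k → ℕ) (hn : ∑ p, v p = n)
    (hn0 : n ≠ 0) : ∑ p, quota n v w p = ∑ t, (w t : ℚ) := by
  have hnQ : (∑ p, (v p : ℚ)) = n := by exact_mod_cast hn
  simp only [quota, ← sum_div, ← mul_sum, hnQ]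
  field_simp

theorem rep_eq_sum_filter {m k : ℕ} (w : Fin k → ℕ) (s : Fin k → Fin m) (p : Fin m) :
    rep w s p = ∑ t ∈ univ.filter (fun t => s t = p), w t :=
  (sum_filter _ _).symm

theorem sum_rep {m k : ℕ} (w : Fin k → ℕ) (s : Fin k → Fin m) :
    ∑ p, rep w s p = ∑ t, w t := by
  simp only [rep]
  rw [sum_comm]
  simp

theorem stmt18_general (n k : ℕ) (v : Fin 2 → ℕ) (w : Fin k → ℕ)
    (hv : ∀ p, 1 ≤ v p) (hn : ∑ p, v p = n) :
    ∃ s : Fin k → Fin 2,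
      (∀ p : Fin 2, ∀ T : Finset (Fin k),
        quota n v w p ≤ ((∑ t ∈ T, w t : ℕ) : ℚ) → rep w s p ≤ ∑ t ∈ T, w t) ∧
      quota n v w 0 ≤ (rep w s 0 : ℚ) := by
  have hn0 : n ≠ 0 := by
    have := hv 0
    rw [Fin.sum_univ_two] at hn
    omega
  have hquota := sum_quota w hn hn0
  rw [Fin.sum_univ_two] at hquota
  have hq0 : quota n v w 0 ≤ ((∑ t, w t : ℕ) : ℚ) := by
    push_cast
    linarith [quota_nonneg n v w 1]
  obtain ⟨T₀, hT₀, hmin⟩ := exists_min_subset_sum_ge w hq0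
  let s : Fin k → Fin 2 := fun t => if t ∈ T₀ then 0 else 1
  have hrep0 : rep w s 0 = ∑ t ∈ T₀, w t := by
    rw [rep_eq_sum_filter]
    congr 1
    ext t
    by_cases ht : t ∈ T₀ <;> simp [s, ht]
  have hrep : (rep w s 0 : ℚ) + rep w s 1 = ∑ t, (w t : ℚ) := by
    have := sum_rep w s
    rw [Fin.sum_univ_two] at this
    exact_mod_cast this
  refine ⟨s, ?_, hrep0 ▸ hT₀⟩
  intro p T hT
  fin_cases p
  · exact hrep0 ▸ hmin T hT
  · have hrep1 : (rep w s 1 : ℚ) ≤ quota n v w 1 := by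
      rw [← hrep0] at hT₀
      linarith
    exact_mod_cast hrep1.trans hT

/-- For every two-party instance there is a seat assignment satisfying WUQ°:
each party's representation is at most u°(p), the least subset-sum of seat
weights that is at least q(p). Moreover the witness gives party 1 total weight
exactly u°(1). -/
theorem stmt18 (n k : ℕ) (v : Fin 2 → ℕ) (w : Fin k → ℕ)
    (hv : ∀ p, 1 ≤ v p) (hn : ∑ p, v p = n) (hw : ∀ t, 1 ≤ w t) :
    ∃ s : Fin k → Fin 2,
      (∀ p : Fin 2, ∀ T : Finset (Fin k),
        quota n v w p ≤ ((∑ t ∈ T, w t : ℕ) : ℚ) → rep w s p ≤ ∑ t ∈ T, w t) ∧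
      quota n v w 0 ≤ (rep w s 0 : ℚ) :=
  stmt18_general n k v w hv hn
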